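/- arXiv:2509.06003 — 15 statements merged into one kernel-verified Lean document; each statement's English description precedes it below -/
import Mathlib

section
/- Let G be a finite simple graph and let k, p ≥ 2 be integers with p dividing k. If G admits a neighborhood-balanced k-coloring, then G admits a neighborhood-balanced p-coloring. -/
/-!
Write `k = p * q` and merge the colours of `Fin k` into `p` groups of `q` colours each, via
`Fin (p * q) ≃ Fin p × Fin q`. Every neighbourhood meets each colour class of the
`k`-colouring in the same number `n` of vertices, so it meets each merged class in `q * n`
vertices.
-/

open SimpleGraph

/-- A neighborhood-balanced `k`-coloring of a simple graph `G` is a vertex coloring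
`c : V → Fin k` such that every vertex has an equal number of neighbors of each color. -/
def IsNBC {V : Type*} (G : SimpleGraph V) (k : ℕ) (c : V → Fin k) : Prop :=
  ∀ v : V, ∀ i j : Fin k,
    {u | G.Adj v u ∧ c u = i}.ncard = {u | G.Adj v u ∧ c u = j}.ncard

open Finset

theorem Set.ncard_biUnion_of_ncard_eq {ι α : Type*} {t : Finset ι} {s : ι → Set α}
    (hs : (t : Set ι).PairwiseDisjoint s) {n : ℕ} (hn : ∀ i ∈ t, (s i).ncard = n) :
    (⋃ i ∈ t, s i).ncard = #t * n := by
  rw [← Finset.set_biUnion_coe]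
  by_cases! hfin : ∀ i ∈ t, (s i).Finite
  · rw [t.finite_toSet.ncard_biUnion hfin hs, finsum_mem_coe_finset, sum_congr rfl hn,
      sum_const, smul_eq_mul]
  · -- `ncard` is `0` on infinite sets, so then `n = 0` and the union is infinite.
    obtain ⟨i, hi, hinf⟩ := hfin
    rw [← hn i hi, hinf.ncard, mul_zero]
    exact (hinf.mono (Set.subset_biUnion_of_mem (u := s) (Finset.mem_coe.2 hi))).ncard

theorem ncard_setOf_and_comp_eq {α β γ : Type*} [Fintype β] [DecidableEq γ] {P : α → Prop}
    {g : α → β} {f : β → γ}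
    (hg : ∀ b b', {x | P x ∧ g x = b}.ncard = {x | P x ∧ g x = b'}.ncard)
    (hf : ∀ c c', #{b | f b = c} = #{b | f b = c'}) (c c' : γ) :
    {x | P x ∧ f (g x) = c}.ncard = {x | P x ∧ f (g x) = c'}.ncard := by
  obtain ⟨n, hn⟩ : ∃ n, ∀ b, {x | P x ∧ g x = b}.ncard = n := by
    rcases isEmpty_or_nonempty β with hβ | ⟨⟨b₀⟩⟩
    · exact ⟨0, isEmptyElim⟩
    · exact ⟨_, fun b => hg b b₀⟩
  have hunion : ∀ c, {x | P x ∧ f (g x) = c} = ⋃ b ∈ ({b | f b = c} : Finset β),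
      {x | P x ∧ g x = b} := fun c => by
    ext x
    simp
  have hdisj : ∀ t : Finset β, (t : Set β).PairwiseDisjoint fun b => {x | P x ∧ g x = b} :=
    fun t b _ b' _ hbb' => Set.disjoint_left.2 fun x hx hx' => hbb' (hx.2.symm.trans hx'.2)
  rw [hunion, hunion, Set.ncard_biUnion_of_ncard_eq (hdisj _) (fun b _ => hn b),
    Set.ncard_biUnion_of_ncard_eq (hdisj _) (fun b _ => hn b), hf]

theorem card_filter_fst_finProdFinEquiv_symm (p q : ℕ) (i : Fin p) :
    #{m : Fin (p * q) | (finProdFinEquiv.symm m).1 = i} = q :=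
  calc #{m : Fin (p * q) | (finProdFinEquiv.symm m).1 = i}
      = #({i} ×ˢ (univ : Finset (Fin q))) := card_equiv finProdFinEquiv.symm (by simp [eq_comm])
    _ = q := by simp

theorem IsNBC.fst_finProdFinEquiv_symm {V : Type*} {G : SimpleGraph V} {p q : ℕ}
    {c : V → Fin (p * q)} (hc : IsNBC G (p * q) c) :
    IsNBC G p fun v => (finProdFinEquiv.symm (c v)).1 := fun v =>
  ncard_setOf_and_comp_eq (f := fun m => (finProdFinEquiv.symm m).1) (hc v) fun i j => by
    rw [card_filter_fst_finProdFinEquiv_symm, card_filter_fst_finProdFinEquiv_symm]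

theorem stmt_2_general {V : Type*} (G : SimpleGraph V)
    (k p : ℕ) (hdvd : p ∣ k)
    (h : ∃ c : V → Fin k, IsNBC G k c) :
    ∃ c : V → Fin p, IsNBC G p c := by
  obtain ⟨q, rfl⟩ := hdvd
  obtain ⟨c, hc⟩ := h
  exact ⟨_, hc.fst_finProdFinEquiv_symm⟩

theorem stmt_2 {V : Type*} [Fintype V] (G : SimpleGraph V)
    (k p : ℕ) (hk : 2 ≤ k) (hp : 2 ≤ p) (hdvd : p ∣ k)
    (h : ∃ c : V → Fin k, IsNBC G k c) :
    ∃ c : V → Fin p, IsNBC G p c :=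
  stmt_2_general G k p hdvd h
end

section
/- Let G be a finite simple graph, k ≥ 2 an integer, and c a neighborhood-balanced k-coloring of G with color classes V_1, …, V_k. Then for any two distinct colors i ≠ j, k² times the number of edges of G with one endpoint in V_i and the other in V_j equals 2·|E(G)|, and for any color i, k² times the number of edges of G with both endpoints in V_i equals |E(G)|. -/
/-!
Count darts (ordered pairs of adjacent vertices) by the colours of their endpoints. Balance gives
every vertex `v` exactly `deg v / k` neighbours of each colour, so `k` times the number of darts
from colour `i` to colour `j` is the degree sum `D i` of the class `V i`. Reversing darts shows that
`D i = D j` for all colours, and the handshake lemma gives `∑ D i = 2 |E|`; hence `k²` times the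
number of `(i, j)`-darts is `2 |E|`. Finally, an edge between distinct colours `i ≠ j` carries one
`(i, j)`-dart, while an edge inside `V i` carries two `(i, i)`-darts.
-/

open SimpleGraph

open Finset

namespace SimpleGraph

variable {V α : Type*} [Fintype V] (G : SimpleGraph V) [DecidableRel G.Adj] [DecidableEq α]
  (c : V → α)

theorem card_dart_color_comm (i j : α) :
    #{d : G.Dart | c d.fst = i ∧ c d.snd = j} = #{d : G.Dart | c d.fst = j ∧ c d.snd = i} :=
  card_nbij' Dart.symm Dart.symm (fun _ _ => by simp_all) (fun _ _ => by simp_all)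
    (fun d _ => Dart.symm_symm d) (fun d _ => Dart.symm_symm d)

theorem card_dart_map_edge_eq (i j : α) :
    #{d : G.Dart | Sym2.map c d.edge = s(i, j)} =
      #{d : G.Dart | c d.fst = i ∧ c d.snd = j ∨ c d.fst = j ∧ c d.snd = i} := by
  simp only [Dart.edge, Sym2.map_mk, Sym2.eq_iff]

variable [DecidableEq V]

theorem card_filter_dart_edge (p : Sym2 V → Prop) [DecidablePred p] :
    #{d : G.Dart | p d.edge} = 2 * #{e ∈ G.edgeFinset | p e} := by
  rw [card_eq_sum_card_fiberwise (f := Dart.edge) (t := {e ∈ G.edgeFinset | p e})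
    fun d hd => by simpa using hd, mul_comm, ← sum_const_nat]
  intro e he
  rw [mem_filter, mem_edgeFinset] at he
  rw [filter_filter, ← G.dart_edge_fiber_card e he.1]
  congr 1
  ext d
  simp only [mem_filter, mem_univ, true_and, and_iff_right_iff_imp]
  rintro rfl
  exact he.2

theorem card_edge_color_pair_of_ne {i j : α} (hij : i ≠ j) :
    #{e ∈ G.edgeFinset | Sym2.map c e = s(i, j)} =
      #{d : G.Dart | c d.fst = i ∧ c d.snd = j} := by
  have := G.card_filter_dart_edge (fun e => Sym2.map c e = s(i, j))
  rw [card_dart_map_edge_eq, filter_or, card_union_of_disjoint, ← card_dart_color_comm G c i j]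
    at this
  · omega
  · exact disjoint_filter.2 fun d _ hij' hji => hij (hij'.1.symm.trans hji.1)

theorem two_mul_card_edge_color_diag (i : α) :
    2 * #{e ∈ G.edgeFinset | Sym2.map c e = s(i, i)} =
      #{d : G.Dart | c d.fst = i ∧ c d.snd = i} := by
  simp only [← card_filter_dart_edge, card_dart_map_edge_eq, or_self]

theorem ncard_adj_color_eq_card_dart (v : V) (j : α) :
    {u | G.Adj v u ∧ c u = j}.ncard = #{d : G.Dart | d.fst = v ∧ c d.snd = j} := by
  rw [← Set.ncard_coe_finset]
  refine Set.ncard_congr (fun u hu => ⟨(v, u), hu.1⟩) ?_ ?_ ?_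
  · intro u hu
    simpa using hu.2
  · intro u w _ _ huw
    simpa using congrArg (·.snd) huw
  · intro d hd
    simp only [coe_filter, mem_univ, true_and, Set.mem_ofPred_eq] at hd
    obtain ⟨rfl, hd⟩ := hd
    exact ⟨d.snd, ⟨d.adj, hd⟩, rfl⟩

theorem card_dart_color_eq_sum (i j : α) :
    #{d : G.Dart | c d.fst = i ∧ c d.snd = j} =
      ∑ v with c v = i, #{d : G.Dart | d.fst = v ∧ c d.snd = j} := by
  rw [card_eq_sum_card_fiberwise (f := (·.fst)) (t := {v | c v = i}) fun d hd => by simp_all]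
  refine sum_congr rfl fun v hv => congrArg card ?_
  ext d
  simp only [mem_filter, mem_univ, true_and] at hv ⊢
  constructor
  · rintro ⟨⟨-, hj⟩, rfl⟩
    exact ⟨rfl, hj⟩
  · rintro ⟨rfl, hj⟩
    exact ⟨⟨hv, hj⟩, rfl⟩

theorem degree_eq_sum_card_dart_color (v : V) [Fintype α] :
    G.degree v = ∑ j, #{d : G.Dart | d.fst = v ∧ c d.snd = j} := by
  rw [← dart_fst_fiber_card_eq_degree, card_eq_sum_card_fiberwise (f := (c ·.snd)) (t := univ)
    fun _ _ => mem_coe.2 (mem_univ _)]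
  simp only [filter_filter]

end SimpleGraph

namespace IsNBC

variable {V : Type*} [Fintype V] [DecidableEq V] {G : SimpleGraph V} [DecidableRel G.Adj]
  {k : ℕ} {c : V → Fin k}

theorem mul_card_dart_fst_color (h : IsNBC G k c) (v : V) (j : Fin k) :
    k * #{d : G.Dart | d.fst = v ∧ c d.snd = j} = G.degree v := by
  have hbalanced (l : Fin k) :
      #{d : G.Dart | d.fst = v ∧ c d.snd = l} = #{d : G.Dart | d.fst = v ∧ c d.snd = j} := by
    rw [← ncard_adj_color_eq_card_dart, ← ncard_adj_color_eq_card_dart, h v l j]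
  rw [G.degree_eq_sum_card_dart_color c v, sum_const_nat fun l _ => hbalanced l, card_univ,
    Fintype.card_fin]

theorem mul_card_dart_color (h : IsNBC G k c) (i j : Fin k) :
    k * #{d : G.Dart | c d.fst = i ∧ c d.snd = j} = ∑ v with c v = i, G.degree v := by
  rw [card_dart_color_eq_sum, mul_sum]
  exact sum_congr rfl fun v _ => h.mul_card_dart_fst_color v j

theorem mul_sum_degree_color (h : IsNBC G k c) (i : Fin k) :
    k * ∑ v with c v = i, G.degree v = 2 * #G.edgeFinset := by
  have hconst (l : Fin k) : ∑ v with c v = l, G.degree v = ∑ v with c v = i, G.degree v :=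
    Nat.eq_of_mul_eq_mul_left i.pos <| by
      rw [← h.mul_card_dart_color l i, card_dart_color_comm, h.mul_card_dart_color i l]
  calc k * ∑ v with c v = i, G.degree v
      = ∑ l, ∑ v with c v = l, G.degree v := by
        rw [sum_congr rfl fun l _ => hconst l, sum_const, card_univ, Fintype.card_fin,
          smul_eq_mul]
    _ = ∑ v, G.degree v := sum_fiberwise _ _ _
    _ = 2 * #G.edgeFinset := G.sum_degrees_eq_twice_card_edges

theorem sq_mul_card_dart_color (h : IsNBC G k c) (i j : Fin k) :
    k ^ 2 * #{d : G.Dart | c d.fst = i ∧ c d.snd = j} = 2 * #G.edgeFinset := by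
  rw [sq, mul_assoc, h.mul_card_dart_color, h.mul_sum_degree_color]

end IsNBC

theorem stmt_3_general {V : Type*} [Fintype V] [DecidableEq V] (G : SimpleGraph V)
    [DecidableRel G.Adj] (k : ℕ) (c : V → Fin k) (h : IsNBC G k c) :
    (∀ i j : Fin k, i ≠ j →
      k ^ 2 * (G.edgeFinset.filter (fun e => Sym2.map c e = s(i, j))).card
        = 2 * G.edgeFinset.card) ∧
    (∀ i : Fin k,
      k ^ 2 * (G.edgeFinset.filter (fun e => Sym2.map c e = s(i, i))).card
        = G.edgeFinset.card) := by
  refine ⟨fun i j hij => ?_, fun i => ?_⟩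
  · rw [G.card_edge_color_pair_of_ne c hij]
    exact h.sq_mul_card_dart_color i j
  · apply Nat.eq_of_mul_eq_mul_left two_pos
    rw [mul_left_comm, G.two_mul_card_edge_color_diag, h.sq_mul_card_dart_color]

theorem stmt_3 {V : Type*} [Fintype V] [DecidableEq V] (G : SimpleGraph V)
    [DecidableRel G.Adj] (k : ℕ) (hk : 2 ≤ k) (c : V → Fin k) (h : IsNBC G k c) :
    (∀ i j : Fin k, i ≠ j →
      k ^ 2 * (G.edgeFinset.filter (fun e => Sym2.map c e = s(i, j))).card
        = 2 * G.edgeFinset.card) ∧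
    (∀ i : Fin k,
      k ^ 2 * (G.edgeFinset.filter (fun e => Sym2.map c e = s(i, i))).card
        = G.edgeFinset.card) :=
  stmt_3_general G k c h
end

section
/- Let G be a finite simple r-regular graph, k ≥ 2 an integer, and c a neighborhood-balanced k-coloring of G with color classes V_1, …, V_k. If r ≥ 1, then k·|V_i| = |V(G)| for every color i. -/
/-!
Every vertex `v` sees each of the `k` colors equally often among its `r` neighbors, so it has
exactly `r / k` neighbors in each color class `V_i`. Counting the edges between `V` and `V_i`
from both ends gives `|V| * (r / k) = r * |V_i|`, and dividing by `r ≥ 1` yields `k * |V_i| = |V|`.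
-/

open SimpleGraph

open Finset

namespace SimpleGraph

variable {V : Type*} (G : SimpleGraph V)

theorem ncard_setOf_adj_and_eq {α : Type*} [DecidableEq α] (v : V) [Fintype (G.neighborSet v)]
    (c : V → α) (i : α) :
    {u | G.Adj v u ∧ c u = i}.ncard = #{u ∈ G.neighborFinset v | c u = i} := by
  rw [← Set.ncard_coe_finset]
  congr 1
  ext u
  simp

theorem sum_card_neighborFinset_filter_eq_sum_degree [Fintype V] [DecidableRel G.Adj]
    (p : V → Prop) [DecidablePred p] :
    ∑ v, #{u ∈ G.neighborFinset v | p u} = ∑ u with p u, G.degree u := by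
  have above (v : V) : {u ∈ G.neighborFinset v | p u} = bipartiteAbove G.Adj {u | p u} v := by
    ext u; simp [bipartiteAbove, and_comm]
  have below (u : V) : G.neighborFinset u = bipartiteBelow G.Adj univ u := by
    ext v; simp [bipartiteBelow, adj_comm]
  simp_rw [above, ← card_neighborFinset_eq_degree, below]
  exact sum_card_bipartiteAbove_eq_sum_card_bipartiteBelow G.Adj

end SimpleGraph

section

variable {V : Type*} {G : SimpleGraph V} {k : ℕ} {c : V → Fin k}

theorem IsNBC.mul_card_neighborFinset_filter [G.LocallyFinite] (h : IsNBC G k c) (v : V)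
    (i : Fin k) : k * #{u ∈ G.neighborFinset v | c u = i} = G.degree v := by
  have same_count (j : Fin k) :
      #{u ∈ G.neighborFinset v | c u = j} = #{u ∈ G.neighborFinset v | c u = i} := by
    simpa only [G.ncard_setOf_adj_and_eq] using h v j i
  calc k * #{u ∈ G.neighborFinset v | c u = i}
      = ∑ j, #{u ∈ G.neighborFinset v | c u = j} := by
        rw [sum_congr rfl fun j _ => same_count j, sum_const, card_univ, Fintype.card_fin,
          smul_eq_mul]
    _ = G.degree v := by
        rw [← card_neighborFinset_eq_degree,
          card_eq_sum_card_fiberwise fun u _ => mem_coe.2 (mem_univ (c u))]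

end

theorem stmt_4_general {V : Type*} [Fintype V] (G : SimpleGraph V)
    [DecidableRel G.Adj] (r k : ℕ) (hr : 1 ≤ r) (hreg : G.IsRegularOfDegree r)
    (c : V → Fin k) (h : IsNBC G k c) :
    ∀ i : Fin k, k * (Finset.univ.filter (fun v => c v = i)).card = Fintype.card V := by
  intro i
  apply Nat.eq_of_mul_eq_mul_left hr
  calc r * (k * #{v | c v = i})
      = k * ∑ u with c u = i, G.degree u := by
        rw [sum_congr rfl fun u _ => hreg.degree_eq u, sum_const, smul_eq_mul]; ring
    _ = ∑ v, k * #{u ∈ G.neighborFinset v | c u = i} := by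
        rw [← G.sum_card_neighborFinset_filter_eq_sum_degree, mul_sum]
    _ = r * Fintype.card V := by
        simp only [h.mul_card_neighborFinset_filter, hreg.degree_eq, sum_const, card_univ,
          smul_eq_mul, mul_comm]

theorem stmt_4 {V : Type*} [Fintype V] [DecidableEq V] (G : SimpleGraph V)
    [DecidableRel G.Adj] (r k : ℕ) (hr : 1 ≤ r) (hreg : G.IsRegularOfDegree r)
    (hk : 2 ≤ k) (c : V → Fin k) (h : IsNBC G k c) :
    ∀ i : Fin k, k * (Finset.univ.filter (fun v => c v = i)).card = Fintype.card V :=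
  stmt_4_general G r k hr hreg c h
end

section
/- Let G be a finite simple r-regular graph with r ≥ 1 and k ≥ 2 an integer. If G admits a neighborhood-balanced k-coloring, then k divides |V(G)| and k² divides |E(G)|. -/
/-!
Let `c` be a neighborhood-balanced `k`-coloring of an `r`-regular graph. Every vertex has exactly
`r / k` neighbors of each color, so double counting the edges between two color classes shows that
all classes have the same size `n`, whence `|V| = k n`. Summing over the class `C` of a fixed color
the number of neighbors inside `C` gives `n r / k`, which is even, being twice the number of edges
of the subgraph induced on `C`; writing it as `2 q`, we get `2 |E| = |V| r = k² · 2 q`.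
-/

open SimpleGraph Finset

namespace SimpleGraph

variable {V : Type*} [Fintype V] (G : SimpleGraph V) [DecidableRel G.Adj]

lemma IsRegularOfDegree.two_mul_card_edgeFinset [DecidableEq V] {d : ℕ}
    (hreg : G.IsRegularOfDegree d) : 2 * #G.edgeFinset = Fintype.card V * d := by
  rw [← sum_degrees_eq_twice_card_edges, sum_congr rfl fun v _ => hreg v, sum_const, card_univ,
    smul_eq_mul]

lemma sum_card_neighborFinset_filter_comm (p q : V → Prop) [DecidablePred p] [DecidablePred q] :
    ∑ v with p v, #{u ∈ G.neighborFinset v | q u} =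
      ∑ u with q u, #{v ∈ G.neighborFinset u | p v} := by
  convert sum_card_bipartiteAbove_eq_sum_card_bipartiteBelow (s := {v | p v}) (t := {u | q u})
    G.Adj using 3 <;> ext <;> simp [bipartiteAbove, bipartiteBelow, and_comm, adj_comm]

lemma even_sum_card_neighborFinset_filter (p : V → Prop) [DecidablePred p] :
    Even (∑ v with p v, #{u ∈ G.neighborFinset v | p u}) := by
  classical
  let H := G.induce {v | p v}
  have hdeg (v : {v // p v}) : H.degree v = #{u ∈ G.neighborFinset v | p u} := by
    rw [← card_neighborFinset_eq_degree, ← card_map (.subtype _), map_neighborFinset_induce]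
    congr 1
    ext; simp
  rw [sum_subtype (p := p) _ (fun v => by simp) (fun v => #{u ∈ G.neighborFinset v | p u})]
  simp_rw [← hdeg]
  exact ⟨_, H.sum_degrees_eq_twice_card_edges.trans (two_mul _)⟩

end SimpleGraph

namespace IsNBC

variable {V : Type*} [Fintype V] {G : SimpleGraph V} [DecidableRel G.Adj] {k r : ℕ}
  {c : V → Fin k}

lemma card_neighborFinset_filter_eq (hc : IsNBC G k c) (v : V) (i j : Fin k) :
    #{u ∈ G.neighborFinset v | c u = i} = #{u ∈ G.neighborFinset v | c u = j} := by
  have hcoe (i : Fin k) :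
      {u | G.Adj v u ∧ c u = i} = ↑{u ∈ G.neighborFinset v | c u = i} := by
    ext; simp
  simpa only [hcoe, Set.ncard_coe_finset] using hc v i j

lemma mul_card_neighborFinset_filter_s5 (hc : IsNBC G k c) (v : V) (i : Fin k) :
    k * #{u ∈ G.neighborFinset v | c u = i} = G.degree v := by
  rw [← card_neighborFinset_eq_degree,
    card_eq_sum_card_fiberwise (s := G.neighborFinset v) (t := univ) fun _ _ => mem_univ (c _),
    sum_congr rfl fun j _ => hc.card_neighborFinset_filter_eq v j i, sum_const, card_univ,
    Fintype.card_fin, smul_eq_mul]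

lemma mul_sum_card_neighborFinset_filter (hc : IsNBC G k c) (hreg : G.IsRegularOfDegree r)
    (s : Finset V) (i : Fin k) :
    k * ∑ v ∈ s, #{u ∈ G.neighborFinset v | c u = i} = #s * r := by
  rw [mul_sum, sum_congr rfl fun v _ => (hc.mul_card_neighborFinset_filter_s5 v i).trans (hreg v),
    sum_const, smul_eq_mul]

lemma card_colorClass_eq (hc : IsNBC G k c) (hreg : G.IsRegularOfDegree r) (hr : 0 < r)
    (i j : Fin k) : #{v | c v = i} = #{v | c v = j} := by
  refine Nat.eq_of_mul_eq_mul_right hr ?_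
  rw [← hc.mul_sum_card_neighborFinset_filter hreg _ j,
    ← hc.mul_sum_card_neighborFinset_filter hreg _ i, G.sum_card_neighborFinset_filter_comm]

lemma card_eq_mul_card_colorClass (hc : IsNBC G k c) (hreg : G.IsRegularOfDegree r) (hr : 0 < r)
    (i : Fin k) : Fintype.card V = k * #{v | c v = i} := by
  rw [← card_univ, card_eq_sum_card_fiberwise (f := c) (t := univ) fun _ _ => mem_univ _,
    sum_congr rfl fun j _ => hc.card_colorClass_eq hreg hr j i, sum_const, card_univ,
    Fintype.card_fin, smul_eq_mul]

end IsNBC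

theorem stmt_5_general {V : Type*} [Fintype V] [DecidableEq V] (G : SimpleGraph V)
    [DecidableRel G.Adj] (r k : ℕ) (hr : 1 ≤ r) (hreg : G.IsRegularOfDegree r)
    (h : ∃ c : V → Fin k, IsNBC G k c) :
    k ∣ Fintype.card V ∧ k ^ 2 ∣ G.edgeFinset.card := by
  obtain ⟨c, hc⟩ := h
  cases isEmpty_or_nonempty V with
  | inl _ => simp [eq_empty_of_isEmpty G.edgeFinset]
  | inr hV =>
    obtain ⟨v₀⟩ := hV
    have hcard := hc.card_eq_mul_card_colorClass hreg hr (c v₀)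
    have hsum := hc.mul_sum_card_neighborFinset_filter hreg {v | c v = c v₀} (c v₀)
    obtain ⟨q, hq⟩ := G.even_sum_card_neighborFinset_filter (c · = c v₀)
    refine ⟨⟨_, hcard⟩, q, Nat.eq_of_mul_eq_mul_left two_pos ?_⟩
    calc 2 * #G.edgeFinset = k * (#{v | c v = c v₀} * r) := by
          rw [hreg.two_mul_card_edgeFinset, hcard, mul_assoc]
      _ = 2 * (k ^ 2 * q) := by rw [← hsum, hq]; ring

theorem stmt_5 {V : Type*} [Fintype V] [DecidableEq V] (G : SimpleGraph V)
    [DecidableRel G.Adj] (r k : ℕ) (hr : 1 ≤ r) (hreg : G.IsRegularOfDegree r)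
    (hk : 2 ≤ k) (h : ∃ c : V → Fin k, IsNBC G k c) :
    k ∣ Fintype.card V ∧ k ^ 2 ∣ G.edgeFinset.card :=
  stmt_5_general G r k hr hreg h
end

section
/- Let G and H be finite simple graphs and k ≥ 2 an integer. If H admits a neighborhood-balanced k-coloring in which all k color classes have the same cardinality, then the lexicographic product G[H] admits a neighborhood-balanced k-coloring. -/
open SimpleGraph

/-- The lexicographic product `G[H]` of simple graphs. -/
def lexProd {V W : Type*} (G : SimpleGraph V) (H : SimpleGraph W) :
    SimpleGraph (V × W) where
  Adj x y := G.Adj x.1 y.1 ∨ (x.1 = y.1 ∧ H.Adj x.2 y.2)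
  symm := by
    constructor
    rintro x y (h | ⟨h1, h2⟩)
    · exact Or.inl h.symm
    · exact Or.inr ⟨h1.symm, h2.symm⟩
  loopless := by
    constructor
    rintro x (h | ⟨-, h2⟩)
    · exact G.irrefl h
    · exact H.irrefl h2

/- Color every copy of `H` in `G[H]` by the balanced coloring `c` of `H`. A neighbor of `(v, w)`
either lies in a copy `{u} × W` with `u ~ v`, contributing `|c⁻¹(i)|` neighbors of color `i` per
such `u`, or lies in the copy `{v} × W` itself, contributing the `H`-neighbors of `w` of color `i`.
Both counts are independent of `i`. -/

section LexProd

variable {V W α : Type*} (G : SimpleGraph V) (H : SimpleGraph W)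

theorem lexProd_adj {x y : V × W} :
    (lexProd G H).Adj x y ↔ G.Adj x.1 y.1 ∨ (x.1 = y.1 ∧ H.Adj x.2 y.2) :=
  Iff.rfl

theorem lexProd_neighborSet_colored_eq (f : W → α) (v : V) (w : W) (i : α) :
    {u : V × W | (lexProd G H).Adj (v, w) u ∧ f u.2 = i} =
      {u | G.Adj v u} ×ˢ {x | f x = i} ∪ {v} ×ˢ {x | H.Adj w x ∧ f x = i} := by
  ext ⟨u, x⟩
  simp only [lexProd_adj, Set.mem_ofPred_eq, Set.mem_union, Set.mem_prod,
    Set.mem_singleton_iff, eq_comm (a := v)]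
  tauto

theorem ncard_lexProd_neighborSet_colored [Finite V] [Finite W] (f : W → α) (v : V) (w : W)
    (i : α) :
    {u : V × W | (lexProd G H).Adj (v, w) u ∧ f u.2 = i}.ncard =
      {u | G.Adj v u}.ncard * {x | f x = i}.ncard + {x | H.Adj w x ∧ f x = i}.ncard := by
  have hdisj : Disjoint ({u | G.Adj v u} ×ˢ {x | f x = i})
      (({v} : Set V) ×ˢ {x | H.Adj w x ∧ f x = i}) := by
    rw [Set.disjoint_left]
    rintro ⟨u, x⟩ ⟨hu, -⟩ ⟨rfl, -⟩
    exact G.irrefl hu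
  rw [lexProd_neighborSet_colored_eq, Set.ncard_union_eq hdisj, Set.ncard_prod, Set.ncard_prod,
    Set.ncard_singleton, one_mul]

variable {H} in
theorem IsNBC.lexProd_comp_snd [Finite V] [Finite W] {k : ℕ} {c : W → Fin k}
    (hc : IsNBC H k c) (hclasses : ∀ i j : Fin k, {w | c w = i}.ncard = {w | c w = j}.ncard) :
    IsNBC (lexProd G H) k (c ∘ Prod.snd) := by
  rintro ⟨v, w⟩ i j
  simp only [Function.comp_apply]
  rw [ncard_lexProd_neighborSet_colored, ncard_lexProd_neighborSet_colored, hclasses i j,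
    hc w i j]

end LexProd

theorem stmt_7_general {V W : Type*} [Fintype V] [Fintype W]
    (G : SimpleGraph V) (H : SimpleGraph W) (k : ℕ)
    (hH : ∃ c : W → Fin k, IsNBC H k c ∧
      ∀ i j : Fin k, {w | c w = i}.ncard = {w | c w = j}.ncard) :
    ∃ c : V × W → Fin k, IsNBC (lexProd G H) k c := by
  obtain ⟨c, hc, hclasses⟩ := hH
  exact ⟨c ∘ Prod.snd, hc.lexProd_comp_snd G hclasses⟩

theorem stmt_7 {V W : Type*} [Fintype V] [Fintype W]
    (G : SimpleGraph V) (H : SimpleGraph W) (k : ℕ) (hk : 2 ≤ k)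
    (hH : ∃ c : W → Fin k, IsNBC H k c ∧
      ∀ i j : Fin k, {w | c w = i}.ncard = {w | c w = j}.ncard) :
    ∃ c : V × W → Fin k, IsNBC (lexProd G H) k c :=
  stmt_7_general G H k hH
end

section
/- Let G and H be finite simple graphs and k ≥ 2 an integer. If G admits a neighborhood-balanced k-coloring, then the direct (tensor) product G × H admits a neighborhood-balanced k-coloring. -/
open SimpleGraph

/-- The direct (tensor) product `G × H` of simple graphs. -/
def tensorProd {V W : Type*} (G : SimpleGraph V) (H : SimpleGraph W) :
    SimpleGraph (V × W) where
  Adj x y := G.Adj x.1 y.1 ∧ H.Adj x.2 y.2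
  symm := by
    constructor
    rintro x y ⟨h1, h2⟩
    exact ⟨h1.symm, h2.symm⟩
  loopless := by
    constructor
    rintro x ⟨h, -⟩
    exact G.irrefl h

lemma tensorProd_colorClass_eq_prod {V W : Type*} (G : SimpleGraph V) (H : SimpleGraph W)
    {k : ℕ} (c : V → Fin k) (x : V × W) (i : Fin k) :
    {u : V × W | (tensorProd G H).Adj x u ∧ c u.1 = i} =
      {u | G.Adj x.1 u ∧ c u = i} ×ˢ H.neighborSet x.2 := by
  ext ⟨a, b⟩
  simp only [Set.mem_ofPred_eq, Set.mem_prod, mem_neighborSet, tensorProd]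
  tauto

lemma IsNBC.tensorProd_comp_fst {V W : Type*} {G : SimpleGraph V} (H : SimpleGraph W)
    {k : ℕ} {c : V → Fin k} (hc : IsNBC G k c) :
    IsNBC (tensorProd G H) k (c ∘ Prod.fst) := by
  intro x i j
  simp only [Function.comp_apply, tensorProd_colorClass_eq_prod, Set.ncard_prod, hc x.1 i j]

theorem stmt_8_general {V W : Type*}
    (G : SimpleGraph V) (H : SimpleGraph W) (k : ℕ)
    (hG : ∃ c : V → Fin k, IsNBC G k c) :
    ∃ c : V × W → Fin k, IsNBC (tensorProd G H) k c := by
  obtain ⟨c, hc⟩ := hG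
  exact ⟨c ∘ Prod.fst, hc.tensorProd_comp_fst H⟩

theorem stmt_8 {V W : Type*} [Fintype V] [Fintype W]
    (G : SimpleGraph V) (H : SimpleGraph W) (k : ℕ) (hk : 2 ≤ k)
    (hG : ∃ c : V → Fin k, IsNBC G k c) :
    ∃ c : V × W → Fin k, IsNBC (tensorProd G H) k c :=
  stmt_8_general G H k hG
end

section
/- Let G and H be finite simple graphs and k ≥ 2 an integer. If both G and H admit neighborhood-balanced k-colorings, then the Cartesian (box) product G □ H admits a neighborhood-balanced k-coloring. -/
open SimpleGraph

/-!
Colour `(u, w)` by `c u + d w`, adding colours in `Fin k` modulo `k`. A neighbour of `(v, w)` in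
`G □ H` moves in exactly one coordinate, so the neighbours of colour `m` are the `G`-neighbours of
`v` of colour `m - d w` together with the `H`-neighbours of `w` of colour `m - c v`. Both counts are
independent of `m` because `c` and `d` are balanced, hence so is their sum.
-/

section BoxProd

variable {V W A : Type*} [AddCommGroup A] (G : SimpleGraph V) (H : SimpleGraph W)

lemma setOf_boxProd_adj_and_add_eq (c : V → A) (d : W → A) (x : V × W) (m : A) :
    {p | (G □ H).Adj x p ∧ c p.1 + d p.2 = m} =
      (·, x.2) '' {u | G.Adj x.1 u ∧ c u = m - d x.2} ∪
        (x.1, ·) '' {w | H.Adj x.2 w ∧ d w = m - c x.1} := by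
  ext ⟨u, w⟩
  simp only [Set.mem_ofPred_eq, boxProd_adj, Set.mem_union, Set.mem_image, Prod.mk.injEq,
    eq_sub_iff_add_eq]
  constructor
  · rintro ⟨⟨hu, rfl⟩ | ⟨hw, rfl⟩, rfl⟩
    · exact Or.inl ⟨u, ⟨hu, rfl⟩, rfl, rfl⟩
    · exact Or.inr ⟨w, ⟨hw, add_comm _ _⟩, rfl, rfl⟩
  · rintro (⟨u, ⟨hu, rfl⟩, rfl, rfl⟩ | ⟨w, ⟨hw, rfl⟩, rfl, rfl⟩)
    · exact ⟨Or.inl ⟨hu, rfl⟩, rfl⟩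
    · exact ⟨Or.inr ⟨hw, rfl⟩, add_comm _ _⟩

lemma ncard_boxProd_adj_and_add_eq [Finite V] [Finite W] (c : V → A) (d : W → A) (x : V × W)
    (m : A) :
    {p | (G □ H).Adj x p ∧ c p.1 + d p.2 = m}.ncard =
      {u | G.Adj x.1 u ∧ c u = m - d x.2}.ncard + {w | H.Adj x.2 w ∧ d w = m - c x.1}.ncard := by
  have hdisj : Disjoint ((·, x.2) '' {u | G.Adj x.1 u ∧ c u = m - d x.2})
      ((x.1, ·) '' {w | H.Adj x.2 w ∧ d w = m - c x.1}) := by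
    rw [Set.disjoint_left]
    rintro _ ⟨u, ⟨hu, -⟩, rfl⟩ ⟨w, -, hw⟩
    exact hu.ne (congrArg Prod.fst hw)
  rw [setOf_boxProd_adj_and_add_eq, Set.ncard_union_eq hdisj,
    Set.ncard_image_of_injective _ (Prod.mk_left_injective x.2),
    Set.ncard_image_of_injective _ (Prod.mk_right_injective x.1)]

lemma IsNBC.boxProd [Finite V] [Finite W] {k : ℕ} [NeZero k] {c : V → Fin k} {d : W → Fin k}
    (hc : IsNBC G k c) (hd : IsNBC H k d) : IsNBC (G □ H) k (fun p => c p.1 + d p.2) := by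
  intro x i j
  rw [ncard_boxProd_adj_and_add_eq, ncard_boxProd_adj_and_add_eq, hc x.1 _ (j - d x.2),
    hd x.2 _ (j - c x.1)]

end BoxProd

theorem stmt_9_general {V W : Type*} [Fintype V] [Fintype W]
    (G : SimpleGraph V) (H : SimpleGraph W) (k : ℕ)
    (hG : ∃ c : V → Fin k, IsNBC G k c) (hH : ∃ c : W → Fin k, IsNBC H k c) :
    ∃ c : V × W → Fin k, IsNBC (G □ H) k c := by
  obtain ⟨c, hc⟩ := hG
  obtain ⟨d, hd⟩ := hH
  rcases eq_zero_or_neZero k with rfl | _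
  · exact ⟨c ∘ Prod.fst, fun _ i => i.elim0⟩
  · exact ⟨_, hc.boxProd G H hd⟩

theorem stmt_9 {V W : Type*} [Fintype V] [Fintype W]
    (G : SimpleGraph V) (H : SimpleGraph W) (k : ℕ) (hk : 2 ≤ k)
    (hG : ∃ c : V → Fin k, IsNBC G k c) (hH : ∃ c : W → Fin k, IsNBC H k c) :
    ∃ c : V × W → Fin k, IsNBC (G □ H) k c :=
  stmt_9_general G H k hG hH
end

section
/- Let G and H be finite simple graphs and k ≥ 2 an integer. If both G and H admit neighborhood-balanced k-colorings, then the strong product G ⊠ H admits a neighborhood-balanced k-coloring. -/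
open SimpleGraph

/-- The strong product `G ⊠ H` of simple graphs. -/
def strongProd {V W : Type*} (G : SimpleGraph V) (H : SimpleGraph W) :
    SimpleGraph (V × W) where
  Adj x y := (x.1 = y.1 ∧ H.Adj x.2 y.2) ∨ (x.2 = y.2 ∧ G.Adj x.1 y.1) ∨
    (G.Adj x.1 y.1 ∧ H.Adj x.2 y.2)
  symm := ⟨by
    rintro x y (⟨h1, h2⟩ | ⟨h1, h2⟩ | ⟨h1, h2⟩)
    · exact Or.inl ⟨h1.symm, h2.symm⟩
    · exact Or.inr (Or.inl ⟨h1.symm, h2.symm⟩)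
    · exact Or.inr (Or.inr ⟨h1.symm, h2.symm⟩)⟩
  loopless := ⟨by
    rintro x (⟨-, h⟩ | ⟨-, h⟩ | ⟨h, -⟩)
    · exact H.irrefl h
    · exact G.irrefl h
    · exact G.irrefl h⟩

/-!
Color `(x, y)` by `c_G x + c_H y` in `Fin k = ℤ/kℤ`. The neighborhood of `(u, v)` in `G ⊠ H`
is the disjoint union of `{u} × N(v)`, `N(u) × {v}` and `N(u) × N(v)`. On a product `A × B`
whose factor `B` is balanced, each row `{a} × B` is colored by a translate of the coloring of
`B`, hence balanced, and so is their disjoint union; symmetrically if `A` is balanced.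
-/

namespace Set

variable {α β : Type*} [Finite α] [Finite β]

theorem ncard_sep_prod_eq_finsum_left (s : Set α) (t : Set β) (P : α × β → Prop) :
    {p ∈ s ×ˢ t | P p}.ncard = ∑ᶠ a ∈ s, {b ∈ t | P (a, b)}.ncard := by
  have hrows : {p ∈ s ×ˢ t | P p} = ⋃ a ∈ s, {a} ×ˢ {b ∈ t | P (a, b)} := by
    ext ⟨a, b⟩
    simp only [mem_ofPred_eq, mem_prod, mem_iUnion, mem_singleton_iff, exists_prop]
    grind
  rw [hrows, s.toFinite.ncard_biUnion fun a _ => toFinite _]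
  · exact finsum_mem_congr rfl fun a _ => by rw [ncard_prod, ncard_singleton, one_mul]
  · exact fun a _ a' _ hne => disjoint_prod.2 <| .inl <| disjoint_singleton.2 hne

theorem ncard_sep_prod_eq_finsum_right (s : Set α) (t : Set β) (P : α × β → Prop) :
    {p ∈ s ×ˢ t | P p}.ncard = ∑ᶠ b ∈ t, {a ∈ s | P (a, b)}.ncard := by
  calc {p ∈ s ×ˢ t | P p}.ncard = {q ∈ t ×ˢ s | P q.swap}.ncard := by
        rw [← ncard_image_of_injective _ Prod.swap_injective]
        congr 1
        ext ⟨a, b⟩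
        simp [and_comm]
    _ = _ := ncard_sep_prod_eq_finsum_left t s _

end Set

def IsBalancedOn {α C : Type*} (s : Set α) (c : α → C) : Prop :=
  ∀ i j : C, {a ∈ s | c a = i}.ncard = {a ∈ s | c a = j}.ncard

namespace IsBalancedOn

variable {α β C : Type*} [Finite α] [Finite β]

theorem union {s t : Set α} {c : α → C} (hs : IsBalancedOn s c) (ht : IsBalancedOn t c)
    (hst : Disjoint s t) : IsBalancedOn (s ∪ t) c := by
  have hsplit (i : C) :
      {a ∈ s ∪ t | c a = i}.ncard = {a ∈ s | c a = i}.ncard + {a ∈ t | c a = i}.ncard := by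
    rw [← Set.ncard_union_eq (hst.mono (Set.sep_subset _ _) (Set.sep_subset _ _))]
    exact congrArg Set.ncard Set.sep_union
  intro i j
  rw [hsplit, hsplit, hs i j, ht i j]

variable [AddGroup C]

theorem prod_add_right (s : Set α) (f : α → C) {t : Set β} {g : β → C}
    (ht : IsBalancedOn t g) : IsBalancedOn (s ×ˢ t) fun p => f p.1 + g p.2 := by
  intro i j
  simp only [Set.ncard_sep_prod_eq_finsum_left, ← eq_neg_add_iff_add_eq]
  exact finsum_mem_congr rfl fun a _ => ht _ _

theorem prod_add_left {s : Set α} {f : α → C} (hs : IsBalancedOn s f) (t : Set β) (g : β → C) :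
    IsBalancedOn (s ×ˢ t) fun p => f p.1 + g p.2 := by
  intro i j
  simp only [Set.ncard_sep_prod_eq_finsum_right, ← eq_sub_iff_add_eq]
  exact finsum_mem_congr rfl fun b _ => hs _ _

end IsBalancedOn

theorem isNBC_iff {V : Type*} {G : SimpleGraph V} {k : ℕ} {c : V → Fin k} :
    IsNBC G k c ↔ ∀ v, IsBalancedOn (G.neighborSet v) c :=
  Iff.rfl

section StrongProduct

variable {V W : Type*} (G : SimpleGraph V) (H : SimpleGraph W)

theorem strongProd_neighborSet (u : V) (v : W) :
    (strongProd G H).neighborSet (u, v) =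
      {u} ×ˢ H.neighborSet v ∪ G.neighborSet u ×ˢ {v} ∪ G.neighborSet u ×ˢ H.neighborSet v := by
  ext ⟨x, y⟩
  simp only [mem_neighborSet, strongProd, Set.mem_union, Set.mem_prod, Set.mem_singleton_iff]
  grind

theorem isBalancedOn_neighborSet_strongProd [Finite V] [Finite W] {C : Type*} [AddGroup C]
    {cG : V → C} {cH : W → C} (hG : ∀ u, IsBalancedOn (G.neighborSet u) cG)
    (hH : ∀ v, IsBalancedOn (H.neighborSet v) cH) (p : V × W) :
    IsBalancedOn ((strongProd G H).neighborSet p) fun q => cG q.1 + cH q.2 := by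
  obtain ⟨u, v⟩ := p
  have hu (t t' : Set W) : Disjoint ({u} ×ˢ t) (G.neighborSet u ×ˢ t') :=
    Set.disjoint_prod.2 <| .inl <| Set.disjoint_singleton_left.2 G.notMem_neighborSet_self
  have hv (s s' : Set V) : Disjoint (s ×ˢ {v}) (s' ×ˢ H.neighborSet v) :=
    Set.disjoint_prod.2 <| .inr <| Set.disjoint_singleton_left.2 H.notMem_neighborSet_self
  rw [strongProd_neighborSet]
  exact (((hH v).prod_add_right {u} cG).union ((hG u).prod_add_left {v} cH) (hu _ _)).union
    ((hH v).prod_add_right _ cG) ((hu _ _).union_left (hv _ _))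

end StrongProduct

theorem stmt_10 {V W : Type*} [Fintype V] [Fintype W]
    (G : SimpleGraph V) (H : SimpleGraph W) (k : ℕ) (hk : 2 ≤ k)
    (hG : ∃ c : V → Fin k, IsNBC G k c) (hH : ∃ c : W → Fin k, IsNBC H k c) :
    ∃ c : V × W → Fin k, IsNBC (strongProd G H) k c := by
  have : NeZero k := ⟨by omega⟩
  obtain ⟨cG, hcG⟩ := hG
  obtain ⟨cH, hcH⟩ := hH
  exact ⟨fun p => cG p.1 + cH p.2,
    isNBC_iff.2 <| isBalancedOn_neighborSet_strongProd G H (isNBC_iff.1 hcG) (isNBC_iff.1 hcH)⟩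
end

section
/- Let G and H be finite simple graphs and k ≥ 2 an integer. If G admits a neighborhood-balanced k-coloring in which all k color classes have the same cardinality, and H admits a neighborhood-balanced k-coloring in which all k color classes have the same cardinality, then the join G + H admits a neighborhood-balanced k-coloring. -/
open SimpleGraph

/-- The join `G + H` of simple graphs: disjoint union plus all cross edges. -/
def joinGraph {V W : Type*} (G : SimpleGraph V) (H : SimpleGraph W) :
    SimpleGraph (V ⊕ W) where
  Adj x y := match x, y with
    | Sum.inl a, Sum.inl b => G.Adj a b
    | Sum.inr a, Sum.inr b => H.Adj a b
    | Sum.inl _, Sum.inr _ => True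
    | Sum.inr _, Sum.inl _ => True
  symm := by
    constructor
    rintro (a | a) (b | b) h
    · exact G.symm.symm _ _ h
    · trivial
    · trivial
    · exact H.symm.symm _ _ h
  loopless := by
    constructor
    rintro (a | a) h
    · exact G.loopless.irrefl a h
    · exact H.loopless.irrefl a h

theorem Set.ncard_preimage_inl_add_ncard_preimage_inr {α β : Type*} (s : Set (α ⊕ β))
    (hs : s.Finite := by toFinite_tac) :
    (Sum.inl ⁻¹' s).ncard + (Sum.inr ⁻¹' s).ncard = s.ncard := by
  have hl : (Sum.inl '' (Sum.inl ⁻¹' s)).Finite := hs.subset (image_preimage_subset _ _)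
  have hr : (Sum.inr '' (Sum.inr ⁻¹' s)).Finite := hs.subset (image_preimage_subset _ _)
  conv_rhs => rw [← image_preimage_inl_union_image_preimage_inr s]
  rw [ncard_union_eq disjoint_image_inl_image_inr hl hr,
    ncard_image_of_injective _ Sum.inl_injective, ncard_image_of_injective _ Sum.inr_injective]

section joinGraph

variable {V W : Type*} (G : SimpleGraph V) (H : SimpleGraph W)

@[simp] lemma joinGraph_adj_inl_inl (a b : V) :
    (joinGraph G H).Adj (.inl a) (.inl b) ↔ G.Adj a b :=
  Iff.rfl

@[simp] lemma joinGraph_adj_inr_inr (a b : W) :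
    (joinGraph G H).Adj (.inr a) (.inr b) ↔ H.Adj a b :=
  Iff.rfl

@[simp] lemma joinGraph_adj_inl_inr (a : V) (b : W) : (joinGraph G H).Adj (.inl a) (.inr b) :=
  trivial

@[simp] lemma joinGraph_adj_inr_inl (a : W) (b : V) : (joinGraph G H).Adj (.inr a) (.inl b) :=
  trivial

end joinGraph

/-- Colouring `G` and `H` in the join separately, a vertex of `G` sees its `G`-neighbours of
colour `i` together with the whole colour class `i` of `H`; so colour classes of equal size in `H`
keep every vertex of `G` balanced, and symmetrically. -/
theorem stmt_11_general {V W : Type*} [Fintype V] [Fintype W]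
    (G : SimpleGraph V) (H : SimpleGraph W) (k : ℕ)
    (hG : ∃ c : V → Fin k, IsNBC G k c ∧
      ∀ i j : Fin k, {v | c v = i}.ncard = {v | c v = j}.ncard)
    (hH : ∃ c : W → Fin k, IsNBC H k c ∧
      ∀ i j : Fin k, {w | c w = i}.ncard = {w | c w = j}.ncard) :
    ∃ c : V ⊕ W → Fin k, IsNBC (joinGraph G H) k c := by
  obtain ⟨cG, hG_nbc, hG_eq⟩ := hG
  obtain ⟨cH, hH_nbc, hH_eq⟩ := hH
  refine ⟨Sum.elim cG cH, ?_⟩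
  rintro (v | w) i j <;>
    rw [← Set.ncard_preimage_inl_add_ncard_preimage_inr,
      ← Set.ncard_preimage_inl_add_ncard_preimage_inr] <;>
    simp only [Set.preimage_ofPred_eq, joinGraph_adj_inl_inl, joinGraph_adj_inl_inr,
      joinGraph_adj_inr_inl, joinGraph_adj_inr_inr, Sum.elim_inl, Sum.elim_inr, true_and]
  · rw [hG_nbc v i j, hH_eq i j]
  · rw [hH_nbc w i j, hG_eq i j]

theorem stmt_11 {V W : Type*} [Fintype V] [Fintype W]
    (G : SimpleGraph V) (H : SimpleGraph W) (k : ℕ) (hk : 2 ≤ k)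
    (hG : ∃ c : V → Fin k, IsNBC G k c ∧
      ∀ i j : Fin k, {v | c v = i}.ncard = {v | c v = j}.ncard)
    (hH : ∃ c : W → Fin k, IsNBC H k c ∧
      ∀ i j : Fin k, {w | c w = i}.ncard = {w | c w = j}.ncard) :
    ∃ c : V ⊕ W → Fin k, IsNBC (joinGraph G H) k c :=
  stmt_11_general G H k hG hH
end

section
/- For every integer n > 1 and every integer k ≥ 2, the complete graph K_n does not admit a neighborhood-balanced k-coloring. -/
open SimpleGraph

/-! In `K_n` a vertex `v` sees every colour class in full except its own, which it sees minus
itself. Balance at `v` therefore makes the class of `c v` exactly one larger than every other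
class, so `c v` is the unique largest class and the colouring is constant. Then every other
colour class is empty, so the class of `c v`, which is all of `K_n`, has exactly one element,
contradicting `n > 1`. -/

section

variable {V : Type*} [Finite V]

lemma ncard_top_adj_and_add_ite {α : Type*} [DecidableEq α] (c : V → α) (v : V) (i : α) :
    {u | (⊤ : SimpleGraph V).Adj v u ∧ c u = i}.ncard + (if c v = i then 1 else 0) =
      {u | c u = i}.ncard := by
  have hdiff : {u | (⊤ : SimpleGraph V).Adj v u ∧ c u = i} = {u | c u = i} \ {v} := by
    ext u
    simp [ne_comm, and_comm]
  rw [hdiff]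
  split_ifs with hv
  · exact Set.ncard_sdiff_singleton_add_one hv (Set.toFinite _)
  · rw [Set.sdiff_singleton_eq_self (s := {u | c u = i}) hv, add_zero]

variable {k : ℕ} {c : V → Fin k}

lemma IsNBC.ncard_colorClass_add_one (h : IsNBC ⊤ k c) (v : V) {j : Fin k} (hj : j ≠ c v) :
    {u | c u = j}.ncard + 1 = {u | c u = c v}.ncard := by
  have hown := ncard_top_adj_and_add_ite c v (c v)
  have hother := ncard_top_adj_and_add_ite c v j
  rw [if_pos rfl] at hown
  rw [if_neg hj.symm, add_zero] at hother
  rw [← hown, ← hother, h v j (c v)]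

lemma IsNBC.eq_of_top (h : IsNBC ⊤ k c) (v w : V) : c v = c w := by
  by_contra hvw
  have hv := h.ncard_colorClass_add_one v (Ne.symm hvw)
  have hw := h.ncard_colorClass_add_one w hvw
  omega

theorem not_isNBC_top [Nontrivial V] (hk : 2 ≤ k) : ¬ IsNBC ⊤ k c := by
  intro h
  have : Nontrivial (Fin k) := Fin.nontrivial_iff_two_le.mpr hk
  obtain ⟨v⟩ := (inferInstance : Nonempty V)
  obtain ⟨j, hj⟩ := exists_ne (c v)
  have hempty : {u | c u = j} = ∅ :=
    Set.eq_empty_of_forall_notMem fun u hu => hj (hu.symm.trans (h.eq_of_top u v))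
  have huniv : {u | c u = c v} = Set.univ := Set.eq_univ_of_forall fun u => h.eq_of_top u v
  have hcard := h.ncard_colorClass_add_one v hj
  rw [hempty, huniv, Set.ncard_empty, Set.ncard_univ] at hcard
  have := Finite.one_lt_card (α := V)
  omega

end

theorem stmt_13 (n k : ℕ) (hn : 1 < n) (hk : 2 ≤ k) :
    ¬ ∃ c : Fin n → Fin k, IsNBC (⊤ : SimpleGraph (Fin n)) k c := by
  rintro ⟨c, h⟩
  have : Nontrivial (Fin n) := Fin.nontrivial_iff_two_le.mpr hn
  exact not_isNBC_top hk h
end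

section
/- Let p ≥ 2 and k ≥ 2 be integers, and let n_1, …, n_p be positive integers. The complete multipartite graph K_{n_1, n_2, …, n_p} admits a neighborhood-balanced k-coloring if and only if k divides n_i for every i = 1, 2, …, p. -/
open SimpleGraph

/-!
Let `a i j` be the number of vertices of colour `j` in part `i` and `S j = ∑ i, a i j`. A vertex of
part `i` sees `S j - a i j` neighbours of colour `j`, so the colouring is balanced iff `S j - a i j`
is independent of `j` for every (nonempty) part `i`. Summing over the `p ≥ 2` parts shows that
`(p - 1) S j`, hence `S j`, and then every `a i j` is independent of `j`: each part is itself split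
evenly among the `k` colours, which is possible exactly when `k` divides its size.
-/

open Finset

theorem exists_card_fiber_eq_iff_dvd {α β : Type*} [Fintype α] [Fintype β] [DecidableEq β] :
    (∃ f : α → β, ∀ b b', #{a | f a = b} = #{a | f a = b'}) ↔
      Fintype.card β ∣ Fintype.card α := by
  constructor
  · rintro ⟨f, hf⟩
    rw [← card_univ (α := α), card_eq_sum_card_fiberwise (fun a _ => mem_univ (f a))]
    cases isEmpty_or_nonempty β with
    | inl _ => simp
    | inr h =>
      obtain ⟨b₀⟩ := h
      rw [sum_congr rfl fun b _ => hf b b₀, sum_const, smul_eq_mul, card_univ]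
      exact dvd_mul_right _ _
  · rintro ⟨m, hm⟩
    let e : α ≃ β × Fin m := (Fintype.equivFin α).trans <| (finCongr hm).trans <|
      finProdFinEquiv.symm.trans <| (Fintype.equivFin β).symm.prodCongr (Equiv.refl _)
    refine ⟨fun a => (e a).1, fun b b' => ?_⟩
    have hfiber : ∀ b, #{a | (e a).1 = b} = m := fun b => by
      rw [card_equiv e (t := {x | x.1 = b}) (by simp)]
      rw [← univ_product_univ, filter_product_left (· = b), card_product]
      simp [filter_eq']
    rw [hfiber, hfiber]

section CompleteMultipartite

variable {ι : Type*} [Fintype ι] [DecidableEq ι] {V : ι → Type*} [∀ i, Fintype (V i)] {k : ℕ}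

def colorCount (c : (Σ i, V i) → Fin k) (i : ι) (j : Fin k) : ℕ := #{a : V i | c ⟨i, a⟩ = j}

theorem ncard_adj_completeMultipartiteGraph (c : (Σ i, V i) → Fin k) (v : Σ i, V i) (j : Fin k) :
    {u | (completeMultipartiteGraph V).Adj v u ∧ c u = j}.ncard =
      ∑ i ∈ univ.erase v.1, colorCount c i j := by
  unfold colorCount
  rw [← card_sigma, ← Set.ncard_coe_finset]
  congr 1
  ext ⟨i, a⟩
  simp [eq_comm]

theorem colorCount_add_ncard_adj (c : (Σ i, V i) → Fin k) (v : Σ i, V i) (j : Fin k) :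
    colorCount c v.1 j + {u | (completeMultipartiteGraph V).Adj v u ∧ c u = j}.ncard =
      ∑ i, colorCount c i j := by
  rw [ncard_adj_completeMultipartiteGraph]
  exact add_sum_erase univ (colorCount c · j) (mem_univ _)

theorem isNBC_completeMultipartiteGraph_of_colorCount_eq {c : (Σ i, V i) → Fin k}
    (hc : ∀ i j j', colorCount c i j = colorCount c i j') :
    IsNBC (completeMultipartiteGraph V) k c := fun v j j' => by
  simp only [ncard_adj_completeMultipartiteGraph, hc _ j j']

theorem colorCount_eq_of_isNBC (hι : 2 ≤ Fintype.card ι) (hV : ∀ i, Nonempty (V i))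
    {c : (Σ i, V i) → Fin k} (hc : IsNBC (completeMultipartiteGraph V) k c) (i : ι)
    (j j' : Fin k) : colorCount c i j = colorCount c i j' := by
  set N : ι → Fin k → ℕ := fun i₀ l =>
    {u | (completeMultipartiteGraph V).Adj ⟨i₀, (hV i₀).some⟩ u ∧ c u = l}.ncard
  set S : Fin k → ℕ := fun l => ∑ i₀, colorCount c i₀ l
  have hsplit : ∀ i j, colorCount c i j + N i j = S j := fun i j =>
    colorCount_add_ncard_adj c ⟨i, (hV i).some⟩ j
  -- Summing `hsplit` over the parts counts every vertex of colour `j` exactly `card ι - 1` times.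
  have hsumN : ∀ l, ∑ i₀, N i₀ l = (Fintype.card ι - 1) * S l := fun l => by
    have := sum_congr rfl fun i₀ (_ : i₀ ∈ univ) => hsplit i₀ l
    rw [sum_add_distrib, sum_const, card_univ, smul_eq_mul] at this
    change S l + _ = _ at this
    rw [Nat.sub_one_mul]
    omega
  have hS : S j = S j' := by
    refine Nat.eq_of_mul_eq_mul_left (by omega : 0 < Fintype.card ι - 1) ?_
    rw [← hsumN, ← hsumN]
    exact sum_congr rfl fun i₀ _ => hc _ j j'
  have := hsplit i j
  have := hsplit i j'
  have : N i j = N i j' := hc _ j j'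
  omega

theorem isNBC_completeMultipartiteGraph_iff (hι : 2 ≤ Fintype.card ι) (hV : ∀ i, Nonempty (V i))
    (c : (Σ i, V i) → Fin k) :
    IsNBC (completeMultipartiteGraph V) k c ↔ ∀ i j j', colorCount c i j = colorCount c i j' :=
  ⟨colorCount_eq_of_isNBC hι hV, isNBC_completeMultipartiteGraph_of_colorCount_eq⟩

end CompleteMultipartite

theorem stmt_14_general (p k : ℕ) (hp : 2 ≤ p)
    (n : Fin p → ℕ) (hn : ∀ i, 1 ≤ n i) :
    (∃ c : (Σ i : Fin p, Fin (n i)) → Fin k,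
        IsNBC (completeMultipartiteGraph (fun i : Fin p => Fin (n i))) k c) ↔
      ∀ i, k ∣ n i := by
  have hparts : 2 ≤ Fintype.card (Fin p) := by rwa [Fintype.card_fin]
  have hne : ∀ i, Nonempty (Fin (n i)) := fun i => Fin.pos_iff_nonempty.mp (hn i)
  simp only [isNBC_completeMultipartiteGraph_iff hparts hne]
  constructor
  · rintro ⟨c, hc⟩ i
    simpa using exists_card_fiber_eq_iff_dvd.mp ⟨fun a => c ⟨i, a⟩, hc i⟩
  · intro hdvd
    choose f hf using fun i =>
      (exists_card_fiber_eq_iff_dvd (α := Fin (n i)) (β := Fin k)).mpr (by simpa using hdvd i)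
    exact ⟨fun u => f u.1 u.2, hf⟩

theorem stmt_14 (p k : ℕ) (hp : 2 ≤ p) (hk : 2 ≤ k)
    (n : Fin p → ℕ) (hn : ∀ i, 1 ≤ n i) :
    (∃ c : (Σ i : Fin p, Fin (n i)) → Fin k,
        IsNBC (completeMultipartiteGraph (fun i : Fin p => Fin (n i))) k c) ↔
      ∀ i, k ∣ n i :=
  stmt_14_general p k hp n hn
end

section
/- Let k ≥ 2, and let n and s be positive multiples of k. Let S = {d_1, d_2, …, d_s} with 1 ≤ d_1 < d_2 < … < d_s < n/2 be such that for each residue i ∈ {1, …, k}, exactly s/k of the integers d_1, …, d_s are congruent to i modulo k. Then the circulant graph C_n(S) admits a neighborhood-balanced k-coloring. -/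
/-!
Colour `v : ZMod n` by its image in `ZMod k`, which is well defined because `k ∣ n`.
Since `0 < d_t < n/2`, the `2s` neighbours `v ± d_t` of `v` are pairwise distinct. The
neighbour `v + d_t` has colour `i` iff `d_t ≡ i - v`, and `v - d_t` has colour `i` iff
`d_t ≡ v - i (mod k)`; as every residue class modulo `k` contains exactly `s/k` of the `d_t`,
each colour occurs `2s/k` times around every vertex.
-/

open SimpleGraph

open Finset

section Circulant

variable {G ι : Type*} [AddCommGroup G] {f : ι → G}

theorem ne_zero_of_injective_sumElim_neg (hf : Function.Injective (Sum.elim f (-f))) (t : ι) :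
    f t ≠ 0 := fun h =>
  Sum.inl_ne_inr (a := t) (b := t) (hf (by simp [h]))

theorem circulantGraph_range_adj_iff (hf : Function.Injective (Sum.elim f (-f))) {v u : G} :
    (circulantGraph (Set.range f)).Adj v u ↔ ∃ t, u = v + f t ∨ u = v - f t := by
  simp only [circulantGraph_adj, Set.mem_range]
  constructor
  · rintro ⟨-, ⟨t, ht⟩ | ⟨t, ht⟩⟩
    · exact ⟨t, Or.inr (by rw [ht]; abel)⟩
    · exact ⟨t, Or.inl (by rw [ht]; abel)⟩
  · rintro ⟨t, rfl | rfl⟩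
    · have := ne_zero_of_injective_sumElim_neg hf t
      exact ⟨by simpa [eq_comm] using this, Or.inr ⟨t, by abel⟩⟩
    · have := ne_zero_of_injective_sumElim_neg hf t
      exact ⟨fun h => this (by simpa using h.symm), Or.inl ⟨t, by abel⟩⟩

theorem ncard_circulantGraph_range_adj_and [Fintype ι] (hf : Function.Injective (Sum.elim f (-f)))
    (v : G) (P : G → Prop) [DecidablePred P] :
    {u | (circulantGraph (Set.range f)).Adj v u ∧ P u}.ncard =
      #{t | P (v + f t)} + #{t | P (v - f t)} := by
  set g : ι ⊕ ι → G := fun x => v + Sum.elim f (-f) x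
  have hg : Function.Injective g := (add_right_injective v).comp hf
  have hset : {u | (circulantGraph (Set.range f)).Adj v u ∧ P u} = g '' {x | P (g x)} := by
    ext u
    simp only [Set.mem_ofPred_eq, Set.mem_image, circulantGraph_range_adj_iff hf, Sum.exists, g,
      Sum.elim_inl, Sum.elim_inr, Pi.neg_apply, ← sub_eq_add_neg]
    constructor
    · rintro ⟨⟨t, rfl | rfl⟩, hP⟩
      exacts [Or.inl ⟨t, hP, rfl⟩, Or.inr ⟨t, hP, rfl⟩]
    · rintro (⟨t, hP, rfl⟩ | ⟨t, hP, rfl⟩)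
      exacts [⟨⟨t, Or.inl rfl⟩, hP⟩, ⟨⟨t, Or.inr rfl⟩, hP⟩]
  rw [hset, Set.ncard_image_of_injective _ hg, Set.ncard_eq_toFinset_card', Set.toFinset_ofPred,
    card_filter, Fintype.sum_sum_type, ← card_filter, ← card_filter]
  simp only [g, Sum.elim_inl, Sum.elim_inr, Pi.neg_apply, ← sub_eq_add_neg]
  rfl

end Circulant

theorem ZMod.injective_sumElim_natCast_neg {ι : Type*} {n : ℕ} {d : ι → ℕ}
    (hd : Function.Injective d) (hpos : ∀ t, 0 < d t) (hhalf : ∀ t, 2 * d t < n) :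
    Function.Injective (Sum.elim (fun t => (d t : ZMod n)) (-fun t => (d t : ZMod n))) := by
  have hcast : ∀ a b, (d a : ZMod n) = d b → a = b := fun a b h => by
    rw [ZMod.natCast_eq_natCast_iff', Nat.mod_eq_of_lt (by linarith [hhalf a]),
      Nat.mod_eq_of_lt (by linarith [hhalf b])] at h
    exact hd h
  have hneg : ∀ a b, (d a : ZMod n) ≠ -(d b) := fun a b h => by
    have hdvd : n ∣ d a + d b := by
      rw [← ZMod.natCast_eq_zero_iff, Nat.cast_add, h, neg_add_cancel]
    have := Nat.le_of_dvd (by linarith [hpos a]) hdvd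
    linarith [hhalf a, hhalf b]
  rintro (a | a) (b | b) h <;>
    simp only [Sum.elim_inl, Sum.elim_inr, Pi.neg_apply, neg_inj] at h
  · rw [hcast a b h]
  · exact (hneg a b h).elim
  · exact (hneg b a h.symm).elim
  · rw [hcast a b h]

theorem mul_card_filter_natCast_eq {ι : Type*} [Fintype ι] {k N : ℕ} [NeZero k] {d : ι → ℕ}
    (h : ∀ r < k, k * #{t | d t % k = r} = N) (a : ZMod k) :
    k * #{t | (d t : ZMod k) = a} = N := by
  rw [← h a.val a.val_lt]
  simp only [← ZMod.val_natCast, (ZMod.val_injective k).eq_iff]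

theorem stmt_16_general (k n s : ℕ) (hs : 0 < s)
    (hnk : k ∣ n) (hsk : k ∣ s)
    (d : Fin s → ℕ) (hd1 : 1 ≤ d ⟨0, hs⟩) (hmono : StrictMono d)
    (hhalf : ∀ t : Fin s, 2 * d t < n)
    (hres : ∀ r : ℕ, r < k →
      k * (Finset.univ.filter (fun t : Fin s => d t % k = r)).card = s) :
    ∃ c : ZMod n → Fin k,
      IsNBC (SimpleGraph.circulantGraph
        (Set.range (fun t : Fin s => (d t : ZMod n)))) k c := by
  have hk : 0 < k := Nat.pos_of_dvd_of_pos hsk hs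
  have : NeZero k := ⟨hk.ne'⟩
  have hpos (t : Fin s) : 0 < d t :=
    hd1.trans (hmono.monotone (show (⟨0, hs⟩ : Fin s) ≤ t from Nat.zero_le _))
  have hinj := ZMod.injective_sumElim_natCast_neg hmono.injective hpos hhalf
  have hcount (a : ZMod k) : #{t | (d t : ZMod k) = a} = s / k :=
    Nat.eq_div_of_mul_eq_right hk.ne' (mul_card_filter_natCast_eq hres a)
  set π := ZMod.castHom hnk (ZMod k)
  refine ⟨fun v => (ZMod.finEquiv k).symm (π v), fun v i j => ?_⟩
  have key (i : Fin k) : {u | (circulantGraph (Set.range fun t => (d t : ZMod n))).Adj v u ∧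
      (ZMod.finEquiv k).symm (π u) = i}.ncard = s / k + s / k := by
    rw [ncard_circulantGraph_range_adj_and hinj]
    congr 1
    · rw [← hcount (ZMod.finEquiv k i - π v)]
      refine congrArg card (filter_congr fun t _ => ?_)
      rw [RingEquiv.symm_apply_eq, map_add, map_natCast, eq_sub_iff_add_eq']
    · rw [← hcount (π v - ZMod.finEquiv k i)]
      refine congrArg card (filter_congr fun t _ => ?_)
      rw [RingEquiv.symm_apply_eq, map_sub, map_natCast, sub_eq_iff_eq_add, eq_sub_iff_add_eq',
        eq_comm]
  rw [key i, key j]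

theorem stmt_16 (k n s : ℕ) (hk : 2 ≤ k) (hn : 0 < n) (hs : 0 < s)
    (hnk : k ∣ n) (hsk : k ∣ s)
    (d : Fin s → ℕ) (hd1 : 1 ≤ d ⟨0, hs⟩) (hmono : StrictMono d)
    (hhalf : ∀ t : Fin s, 2 * d t < n)
    (hres : ∀ r : ℕ, r < k →
      k * (Finset.univ.filter (fun t : Fin s => d t % k = r)).card = s) :
    ∃ c : ZMod n → Fin k,
      IsNBC (SimpleGraph.circulantGraph
        (Set.range (fun t : Fin s => (d t : ZMod n)))) k c :=
  stmt_16_general k n s hs hnk hsk d hd1 hmono hhalf hres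
end

section
/- Let k ≥ 2 and d ≥ 1 be integers. The Hamming graph H(d,k) admits a neighborhood-balanced k-coloring if and only if d ≡ 0 (mod k). -/
/-!
If a `k`-coloring is neighborhood balanced, every vertex has the same number of neighbors of
each color, so `k` divides the degree `d (k - 1)`; as `k` and `k - 1` are coprime, `k ∣ d`.

Conversely, for `d = k m` color a word by the sum in `ℤ/k` of its letters in a fixed set `W` of
`(k - 1) m` coordinates. Changing a letter outside `W` keeps the color, which gives `m (k - 1)`
neighbors of the vertex's own color; changing a letter in `W` to each of its `k - 1` other
values shifts the color through every other color exactly once, which gives `(k - 1) m`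
neighbors of each other color.
-/

open SimpleGraph

/-- The Hamming graph `H(d,k)`: vertices are functions `Fin d → Fin k`, and two
vertices are adjacent iff they differ in exactly one coordinate. -/
def hammingGraph (d k : ℕ) : SimpleGraph (Fin d → Fin k) where
  Adj x y := ∃! i, x i ≠ y i
  symm := by
    constructor
    rintro x y ⟨i, hi, hu⟩
    exact ⟨i, hi.symm, fun j hj => hu j hj.symm⟩
  loopless := by
    constructor
    rintro x ⟨i, hi, -⟩
    exact hi rfl

open Finset Function

theorem IsNBC.mul_ncard_eq_ncard_neighborSet {V : Type*} {G : SimpleGraph V} {k : ℕ}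
    {c : V → Fin k} (hc : IsNBC G k c) {v : V} (hv : (G.neighborSet v).Finite) (i : Fin k) :
    k * {u | G.Adj v u ∧ c u = i}.ncard = (G.neighborSet v).ncard := by
  have hunion : G.neighborSet v = ⋃ j, {u | G.Adj v u ∧ c u = j} := by
    ext u
    simp
  have hdisj : Pairwise (Disjoint on fun j => {u | G.Adj v u ∧ c u = j}) :=
    fun j j' hjj' => Set.disjoint_left.mpr fun u hu hu' => hjj' (hu.2.symm.trans hu'.2)
  rw [hunion, Set.ncard_iUnion_of_finite (fun j => hv.subset fun u hu => hu.1) hdisj,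
    finsum_eq_sum_of_fintype, sum_congr rfl fun j _ => hc v j i]
  simp

theorem hammingGraph_adj_iff {d k : ℕ} {v u : Fin d → Fin k} :
    (hammingGraph d k).Adj v u ↔ ∃ p, ∃ a ≠ v p, u = update v p a := by
  constructor
  · rintro ⟨p, hp, hu⟩
    refine ⟨p, u p, Ne.symm hp, funext fun q => ?_⟩
    by_cases hq : q = p
    · subst hq; simp
    · rw [update_of_ne hq]
      by_contra h
      exact hq (hu q fun h' => h h'.symm)
  · rintro ⟨p, a, ha, rfl⟩
    refine ⟨p, by simpa using Ne.symm ha, fun q hq => ?_⟩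
    by_contra h
    exact hq (update_of_ne h a v).symm

theorem ncard_hammingGraph_adj_and {d k : ℕ} (v : Fin d → Fin k)
    (P : (Fin d → Fin k) → Prop) :
    {u | (hammingGraph d k).Adj v u ∧ P u}.ncard
      = ∑ p, {a | a ≠ v p ∧ P (update v p a)}.ncard := by
  have hunion : {u | (hammingGraph d k).Adj v u ∧ P u}
      = ⋃ p, update v p '' {a | a ≠ v p ∧ P (update v p a)} := by
    ext u
    simp only [hammingGraph_adj_iff, Set.mem_ofPred_eq, Set.mem_iUnion, Set.mem_image]
    constructor
    · rintro ⟨⟨p, a, ha, rfl⟩, hP⟩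
      exact ⟨p, a, ⟨ha, hP⟩, rfl⟩
    · rintro ⟨p, a, ⟨ha, hP⟩, rfl⟩
      exact ⟨⟨p, a, ha, rfl⟩, hP⟩
  have hdisj :
      Pairwise (Disjoint on fun p => update v p '' {a | a ≠ v p ∧ P (update v p a)}) := by
    refine fun p q hpq => Set.disjoint_left.mpr ?_
    rintro _ ⟨a, ⟨ha, -⟩, rfl⟩ ⟨b, -, hb⟩
    have := congrFun hb p
    rw [update_self, update_of_ne hpq] at this
    exact ha this.symm
  rw [hunion, Set.ncard_iUnion_of_finite (fun _ => Set.toFinite _) hdisj,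
    finsum_eq_sum_of_fintype]
  exact sum_congr rfl fun p _ => Set.ncard_image_of_injective _ (update_injective v p)

theorem ncard_neighborSet_hammingGraph {d k : ℕ} (v : Fin d → Fin k) :
    ((hammingGraph d k).neighborSet v).ncard = d * (k - 1) := by
  have h := ncard_hammingGraph_adj_and v fun _ => True
  simp only [and_true] at h
  rw [neighborSet, h]
  simp [Set.ncard_eq_toFinset_card', filter_ne']

theorem dvd_of_isNBC_hammingGraph {d k : ℕ} (hk : 0 < k) {c : (Fin d → Fin k) → Fin k}
    (hc : IsNBC (hammingGraph d k) k c) : k ∣ d := by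
  have hdeg :=
    hc.mul_ncard_eq_ncard_neighborSet (v := fun _ => ⟨0, hk⟩) (Set.toFinite _) ⟨0, hk⟩
  rw [ncard_neighborSet_hammingGraph] at hdeg
  have hcop : Nat.Coprime k (k - 1) :=
    (Nat.coprime_self_sub_right hk).mpr (Nat.coprime_one_right k)
  exact hcop.dvd_of_dvd_mul_right ⟨_, hdeg.symm⟩

section coordSumColoring

variable {d k : ℕ} [NeZero k] (W : Finset (Fin d))

def coordSumColoring (x : Fin d → Fin k) : Fin k :=
  ∑ q ∈ W, x q

variable {W} (v : Fin d → Fin k) {p : Fin d}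

theorem coordSumColoring_update_of_notMem (hp : p ∉ W) (a : Fin k) :
    coordSumColoring W (update v p a) = coordSumColoring W v :=
  sum_update_of_notMem hp v a

theorem coordSumColoring_update_of_mem (hp : p ∈ W) (a : Fin k) :
    coordSumColoring W (update v p a) = coordSumColoring W v + (a - v p) := by
  rw [coordSumColoring, coordSumColoring, sum_update_of_mem hp,
    sum_eq_add_sum_sdiff_singleton_of_mem hp]
  abel

theorem ncard_update_coordSumColoring_eq_of_notMem (hp : p ∉ W) (i : Fin k) :
    {a | a ≠ v p ∧ coordSumColoring W (update v p a) = i}.ncard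
      = if coordSumColoring W v = i then k - 1 else 0 := by
  simp_rw [coordSumColoring_update_of_notMem v hp]
  split_ifs with h <;> simp [h, Set.ncard_eq_toFinset_card', filter_ne']

theorem ncard_update_coordSumColoring_eq_of_mem (hp : p ∈ W) (i : Fin k) :
    {a | a ≠ v p ∧ coordSumColoring W (update v p a) = i}.ncard
      = if coordSumColoring W v = i then 0 else 1 := by
  simp_rw [coordSumColoring_update_of_mem v hp]
  split_ifs with h
  · simp [h, sub_eq_zero]
  · rw [Set.ncard_eq_one]
    refine ⟨i - coordSumColoring W v + v p, Set.ext fun a => ?_⟩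
    simp only [Set.mem_ofPred_eq, Set.mem_singleton_iff]
    constructor
    · rintro ⟨-, ha⟩
      rw [← ha]
      abel
    · rintro rfl
      refine ⟨fun ha => h ?_, by abel⟩
      exact (sub_eq_zero.mp (by simpa using ha)).symm

theorem ncard_hammingGraph_adj_and_coordSumColoring_eq (i : Fin k) :
    {u | (hammingGraph d k).Adj v u ∧ coordSumColoring W u = i}.ncard
      = if coordSumColoring W v = i then #Wᶜ * (k - 1) else #W := by
  rw [ncard_hammingGraph_adj_and, ← sum_add_sum_compl W,
    sum_congr rfl fun p hp => ncard_update_coordSumColoring_eq_of_mem v hp i,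
    sum_congr rfl fun p hp => ncard_update_coordSumColoring_eq_of_notMem v (mem_compl.mp hp) i]
  split_ifs <;> simp

theorem isNBC_coordSumColoring (hW : #Wᶜ * (k - 1) = #W) :
    IsNBC (hammingGraph d k) k (coordSumColoring W) := by
  intro v i j
  rw [ncard_hammingGraph_adj_and_coordSumColoring_eq,
    ncard_hammingGraph_adj_and_coordSumColoring_eq]
  split_ifs <;> simp [hW]

end coordSumColoring

theorem exists_isNBC_hammingGraph {d k : ℕ} [NeZero k] (h : k ∣ d) :
    ∃ c, IsNBC (hammingGraph d k) k c := by
  obtain ⟨m, rfl⟩ := h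
  obtain ⟨W, -, hW⟩ := exists_subset_card_eq (s := (univ : Finset (Fin (k * m))))
    (n := (k - 1) * m) (by simpa using Nat.mul_le_mul_right m (Nat.sub_le k 1))
  refine ⟨coordSumColoring W, isNBC_coordSumColoring ?_⟩
  have hk : k - (k - 1) = 1 := by have := NeZero.pos k; omega
  rw [card_compl, Fintype.card_fin, hW, ← Nat.sub_mul, hk, one_mul, mul_comm]

theorem stmt_17_general (d k : ℕ) (hk : 2 ≤ k) :
    (∃ c : (Fin d → Fin k) → Fin k, IsNBC (hammingGraph d k) k c) ↔ k ∣ d := by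
  have : NeZero k := ⟨by omega⟩
  exact ⟨fun ⟨_, hc⟩ => dvd_of_isNBC_hammingGraph (NeZero.pos k) hc,
    exists_isNBC_hammingGraph⟩

theorem stmt_17 (d k : ℕ) (hd : 1 ≤ d) (hk : 2 ≤ k) :
    (∃ c : (Fin d → Fin k) → Fin k, IsNBC (hammingGraph d k) k c) ↔ k ∣ d :=
  stmt_17_general d k hk
end

section
/- For every integer d ≥ 1, the hypercube graph Q_d admits a neighborhood-balanced 2-coloring if and only if d is even. -/
open SimpleGraph

/-- The hypercube graph `Q_d`: vertices are functions `Fin d → Fin 2`, and two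
vertices are adjacent iff they differ in exactly one coordinate. -/
def hypercubeGraph (d : ℕ) : SimpleGraph (Fin d → Fin 2) where
  Adj x y := ∃! i, x i ≠ y i
  symm := by
    constructor
    rintro x y ⟨i, hi, hu⟩
    exact ⟨i, hi.symm, fun j hj => hu j hj.symm⟩
  loopless := by
    constructor
    rintro x ⟨i, hi, -⟩
    exact hi rfl

/-!
Every vertex of `Q_d` has exactly `d` neighbours, and a balanced 2-coloring splits them into two
classes of equal size, so `d` is even. Conversely, for `d = 2m` pick `m` coordinates `S` and
color a vertex by the parity of its coordinates in `S`: moving along coordinate `i` changes the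
color exactly when `i ∈ S`, so every vertex sees `m` neighbours of each color.
-/

open Finset

theorem IsNBC.ncard_neighborSet_eq_mul {V : Type*} {G : SimpleGraph V} {k : ℕ} {c : V → Fin k}
    (hc : IsNBC G k c) (v : V) (hv : (G.neighborSet v).Finite) :
    (G.neighborSet v).ncard = k * {u | G.Adj v u ∧ c u = c v}.ncard := by
  classical
  calc (G.neighborSet v).ncard
      = #hv.toFinset := Set.ncard_eq_toFinset_card _ hv
    _ = ∑ i : Fin k, #{u ∈ hv.toFinset | c u = i} :=
        card_eq_sum_card_fiberwise fun _ _ => mem_univ _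
    _ = ∑ i : Fin k, {u | G.Adj v u ∧ c u = i}.ncard := by
        refine sum_congr rfl fun i _ => ?_
        rw [← Set.ncard_coe_finset]
        congr 1
        ext u
        simp
    _ = ∑ _i : Fin k, {u | G.Adj v u ∧ c u = c v}.ncard :=
        sum_congr rfl fun i _ => hc v i (c v)
    _ = k * {u | G.Adj v u ∧ c u = c v}.ncard := by simp

theorem Fin.two_ne_iff_eq_add_one {a b : Fin 2} : a ≠ b ↔ b = a + 1 := by
  revert a b
  decide

namespace hypercubeGraph

variable {d : ℕ}

def flipAt (v : Fin d → Fin 2) (i : Fin d) : Fin d → Fin 2 :=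
  v + Pi.single i 1

theorem flipAt_apply_self (v : Fin d → Fin 2) (i : Fin d) : flipAt v i i = v i + 1 := by
  simp [flipAt]

theorem flipAt_apply_of_ne (v : Fin d → Fin 2) {i j : Fin d} (h : j ≠ i) :
    flipAt v i j = v j := by
  simp [flipAt, h]

theorem flipAt_injective (v : Fin d → Fin 2) : Function.Injective (flipAt v) := by
  intro i j hij
  by_contra hne
  have := congrFun hij i
  rw [flipAt_apply_self, flipAt_apply_of_ne v hne] at this
  exact Fin.two_ne_iff_eq_add_one.mpr rfl this.symm

theorem adj_iff {v u : Fin d → Fin 2} : (hypercubeGraph d).Adj v u ↔ ∃ i, flipAt v i = u := by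
  constructor
  · rintro ⟨i, hi, huniq⟩
    refine ⟨i, funext fun j => ?_⟩
    by_cases hj : j = i
    · subst hj
      rw [flipAt_apply_self, Fin.two_ne_iff_eq_add_one.mp hi]
    · rw [flipAt_apply_of_ne v hj]
      by_contra h
      exact hj (huniq j h)
  · rintro ⟨i, rfl⟩
    refine ⟨i, ?_, fun j hj => ?_⟩
    · show v i ≠ flipAt v i i
      rw [flipAt_apply_self]
      exact Fin.two_ne_iff_eq_add_one.mpr rfl
    · by_contra hne
      exact hj (flipAt_apply_of_ne v hne).symm

theorem neighborSet_eq_range (v : Fin d → Fin 2) :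
    (hypercubeGraph d).neighborSet v = Set.range (flipAt v) := by
  ext u
  exact adj_iff

theorem ncard_neighborSet (v : Fin d → Fin 2) : ((hypercubeGraph d).neighborSet v).ncard = d := by
  rw [neighborSet_eq_range, ← Set.image_univ, Set.ncard_image_of_injective _ (flipAt_injective v),
    Set.ncard_univ, Nat.card_eq_fintype_card, Fintype.card_fin]

theorem ncard_adj_and_eq (v : Fin d → Fin 2) (c : (Fin d → Fin 2) → Fin 2) (j : Fin 2) :
    {u | (hypercubeGraph d).Adj v u ∧ c u = j}.ncard = {i | c (flipAt v i) = j}.ncard := by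
  have : {u | (hypercubeGraph d).Adj v u ∧ c u = j} = flipAt v '' {i | c (flipAt v i) = j} := by
    ext u
    simp only [Set.mem_ofPred_eq, Set.mem_image, adj_iff]
    grind
  rw [this, Set.ncard_image_of_injective _ (flipAt_injective v)]

def parityColoring (S : Finset (Fin d)) (x : Fin d → Fin 2) : Fin 2 :=
  ∑ i ∈ S, x i

theorem parityColoring_flipAt (S : Finset (Fin d)) (v : Fin d → Fin 2) (i : Fin d) :
    parityColoring S (flipAt v i) = parityColoring S v + if i ∈ S then 1 else 0 := by
  simp [parityColoring, flipAt, sum_add_distrib, sum_pi_single']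

theorem setOf_parityColoring_flipAt_eq_add_one (S : Finset (Fin d)) (v : Fin d → Fin 2) :
    {i | parityColoring S (flipAt v i) = parityColoring S v + 1} = S := by
  ext i
  by_cases hi : i ∈ S <;> simp [parityColoring_flipAt, hi]

theorem setOf_parityColoring_flipAt_eq_self (S : Finset (Fin d)) (v : Fin d → Fin 2) :
    {i | parityColoring S (flipAt v i) = parityColoring S v} = ↑Sᶜ := by
  ext i
  by_cases hi : i ∈ S <;> simp [parityColoring_flipAt, hi]

theorem isNBC_parityColoring {S : Finset (Fin d)} (hS : 2 * #S = d) :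
    IsNBC (hypercubeGraph d) 2 (parityColoring S) := by
  have hcount : ∀ v j, {i | parityColoring S (flipAt v i) = j}.ncard = #S := by
    intro v j
    by_cases hj : parityColoring S v = j
    · rw [← hj, setOf_parityColoring_flipAt_eq_self, Set.ncard_coe_finset, card_compl,
        Fintype.card_fin]
      omega
    · rw [Fin.two_ne_iff_eq_add_one.mp hj, setOf_parityColoring_flipAt_eq_add_one,
        Set.ncard_coe_finset]
  intro v i j
  rw [ncard_adj_and_eq, ncard_adj_and_eq, hcount, hcount]

end hypercubeGraph

open hypercubeGraph in
theorem stmt_18_general (d : ℕ) :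
    (∃ c : (Fin d → Fin 2) → Fin 2, IsNBC (hypercubeGraph d) 2 c) ↔ Even d := by
  constructor
  · rintro ⟨c, hc⟩
    have h := hc.ncard_neighborSet_eq_mul 0 (Set.toFinite _)
    rw [ncard_neighborSet] at h
    exact even_iff_two_dvd.mpr ⟨_, h⟩
  · rintro ⟨m, rfl⟩
    obtain ⟨S, -, hS⟩ := exists_subset_card_eq (show m ≤ #(univ : Finset (Fin (m + m))) by simp)
    exact ⟨parityColoring S, isNBC_parityColoring (by omega)⟩

theorem stmt_18 (d : ℕ) (hd : 1 ≤ d) :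
    (∃ c : (Fin d → Fin 2) → Fin 2, IsNBC (hypercubeGraph d) 2 c) ↔ Even d :=
  stmt_18_general d
end

section
/- Let k ≥ 2 be an integer. Every finite simple graph G is an induced subgraph of some finite simple graph H that admits a neighborhood-balanced k-coloring; that is, there exist a finite simple graph H admitting a neighborhood-balanced k-coloring and a graph embedding of G into H (an injective map on vertices that preserves both adjacency and non-adjacency). -/
open SimpleGraph

/-! Replace every vertex `v` of `G` by `k` pairwise non-adjacent copies `(v, i)`, joining `(v, i)` to
`(w, j)` whenever `v ~ w` in `G`. The copies `(v, 0)` span an induced copy of `G`, and the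
neighbours of `(v, i)` of colour `j` are exactly the `(w, j)` with `w ~ v`, so colouring `(v, i)`
by `i` is balanced. -/

namespace SimpleGraph

variable {V W : Type*}

def Embedding.comapOfLeftInverse (G : SimpleGraph V) {f : W → V} {s : V → W}
    (hs : Function.LeftInverse f s) : G ↪g G.comap f where
  toFun := s
  inj' := hs.injective
  map_rel_iff' := by simp [hs _]

theorem isNBC_comap_fst_snd (G : SimpleGraph V) (k : ℕ) :
    IsNBC (G.comap (Prod.fst : V × Fin k → V)) k Prod.snd := by
  have colorClass (v : V × Fin k) (i : Fin k) :
      {u | (G.comap Prod.fst).Adj v u ∧ u.2 = i} = (·, i) '' G.neighborSet v.1 := by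
    ext ⟨w, j⟩
    simp [and_comm, eq_comm]
  intro v i j
  rw [colorClass, colorClass, Set.ncard_image_of_injective _ (Prod.mk_left_injective i),
    Set.ncard_image_of_injective _ (Prod.mk_left_injective j)]

end SimpleGraph

theorem stmt_19 {V : Type*} [Fintype V] (G : SimpleGraph V) (k : ℕ) (hk : 2 ≤ k) :
    ∃ (W : Type) (_ : Fintype W) (H : SimpleGraph W) (c : W → Fin k),
      IsNBC H k c ∧ Nonempty (G ↪g H) := by
  -- `W` must live in `Type`, while `V` may not: transport `G` to `Fin (card V)` first.
  let e := Fintype.equivFin V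
  let G' := G.map e.toEmbedding
  let zero : Fin k := ⟨0, by omega⟩
  refine ⟨Fin (Fintype.card V) × Fin k, inferInstance, G'.comap Prod.fst, Prod.snd,
    isNBC_comap_fst_snd G' k, ⟨?_⟩⟩
  exact (Iso.map e G).toEmbedding.trans
    (Embedding.comapOfLeftInverse G' (s := (·, zero)) fun _ => rfl)
end
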